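/- arXiv:1509.09168 — 7 statements merged into one kernel-verified Lean document; each statement's English description precedes it below -/
import Mathlib

section
/- Let G = (V,E) be a graph and let 1 ≤ r ≤ s be integers. Suppose G contains an independent set X of size s such that every vertex in V \ X has at most r-1 neighbors in X, and X is not a dominating set of G. Then there exists an r-coloring of the edges of G such that V(G) cannot be covered by the vertex sets of s or fewer monochromatic connected subgraphs (i.e., tc_r(G) > s). -/
open SimpleGraph

/-- The subgraph of `G` consisting of edges of color `i` under edge-coloring `c`. -/
def monoSub {V : Type*} (G : SimpleGraph V) {r : ℕ} (c : Sym2 V → Fin r) (i : Fin r) :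
    SimpleGraph V where
  Adj u v := G.Adj u v ∧ c s(u, v) = i
  symm := ⟨fun u v h => ⟨h.1.symm, by rw [Sym2.eq_swap]; exact h.2⟩⟩
  loopless := ⟨fun u h => G.loopless.irrefl u h.1⟩

/-- `V(G)` can be covered by at most `s` monochromatic connected subgraphs. -/
def HasMonoCover {V : Type*} (G : SimpleGraph V) {r : ℕ} (c : Sym2 V → Fin r) (s : ℕ) : Prop :=
  ∃ t : ℕ, t ≤ s ∧ ∃ (f : Fin t → Set V) (col : Fin t → Fin r),
    (∀ j, ((monoSub G c (col j)).induce (f j)).Connected) ∧ (⋃ j, f j) = Set.univ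

/-- `V(G)` can be partitioned into at most `s` monochromatic connected subgraphs. -/
def HasMonoPartition {V : Type*} (G : SimpleGraph V) {r : ℕ} (c : Sym2 V → Fin r) (s : ℕ) : Prop :=
  ∃ t : ℕ, t ≤ s ∧ ∃ (f : Fin t → Set V) (col : Fin t → Fin r),
    (∀ j, ((monoSub G c (col j)).induce (f j)).Connected) ∧ (⋃ j, f j) = Set.univ ∧
    ∀ j j', j ≠ j' → Disjoint (f j) (f j')

/-- The independence number of `G`. -/
noncomputable def indepNum' {V : Type*} (G : SimpleGraph V) : ℕ :=
  sSup {k | ∃ s : Finset V, s.card = k ∧ ∀ u ∈ s, ∀ v ∈ s, u ≠ v → ¬ G.Adj u v}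

/-!
Colour the edges from each vertex outside `X` to `X` injectively with the first `r - 1` colours,
and all edges outside `X` with the last colour. Then every colour class but the last is a star
forest centred in the independent set `X`, while the last one avoids `X`. Hence no monochromatic
connected subgraph meets `X ∪ {w}`, for `w` a vertex without neighbours in `X`, in two vertices,
and covering these `s + 1` vertices takes `s + 1` pieces.
-/

section

variable {V : Type*}

theorem SimpleGraph.Reachable.apply_eq_of_forall_adj {α : Type*} {H : SimpleGraph V} (f : V → α)
    (hf : ∀ a b, H.Adj a b → f a = f b) {x y : V} (h : H.Reachable x y) : f x = f y := by
  obtain ⟨p⟩ := h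
  induction p with
  | nil => rfl
  | cons hab _ ih => exact (hf _ _ hab).trans ih

theorem card_le_of_hasMonoCover {G : SimpleGraph V} {r : ℕ} {c : Sym2 V → Fin r} {t : ℕ}
    (S : Finset V) (hS : ∀ i, ∀ x ∈ S, ∀ y ∈ S, (monoSub G c i).Reachable x y → x = y)
    (h : HasMonoCover G c t) : S.card ≤ t := by
  obtain ⟨t', ht', f, col, hconn, hcover⟩ := h
  have hpiece : ∀ z, ∃ j, z ∈ f j := fun z => Set.mem_iUnion.1 (hcover ▸ Set.mem_univ z)
  choose j hj using hpiece
  have hinj : Set.InjOn j S := by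
    intro x hx y hy hxy
    have hy' : y ∈ f (j x) := hxy ▸ hj y
    exact hS (col (j x)) x hx y hy
      (((hconn (j x)).preconnected ⟨x, hj x⟩ ⟨y, hy'⟩).map (Embedding.induce _).toHom)
  calc S.card ≤ (Finset.univ : Finset (Fin t')).card :=
        Finset.card_le_card_of_injOn j (fun _ _ => Finset.mem_univ _) hinj
    _ = t' := Finset.card_fin t'
    _ ≤ t := ht'

/-- Every colour other than `Fin.last n` spans a star forest whose centres lie in `X`, and the
last colour is used only outside `X`. -/
structure IsStarForestColoring (G : SimpleGraph V) (X : Set V) {n : ℕ}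
    (c : Sym2 V → Fin (n + 1)) : Prop where
  outside : ∀ a b, a ∉ X → b ∉ X → G.Adj a b → c s(a, b) = Fin.last n
  toX_ne_last : ∀ v ∉ X, ∀ u ∈ X, G.Adj v u → c s(v, u) ≠ Fin.last n
  toX_injOn : ∀ v ∉ X, Set.InjOn (fun u => c s(v, u)) (X ∩ G.neighborSet v)

theorem IsStarForestColoring.eq_of_reachable {G : SimpleGraph V} {X : Set V} {n : ℕ}
    {c : Sym2 V → Fin (n + 1)} (hc : IsStarForestColoring G X c)
    (hX : ∀ u ∈ X, ∀ v ∈ X, ¬ G.Adj u v) {w : V} (hw : w ∉ X) (hwX : ∀ u ∈ X, ¬ G.Adj w u)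
    (i : Fin (n + 1)) {x y : V} (hx : x = w ∨ x ∈ X) (hy : y = w ∨ y ∈ X)
    (h : (monoSub G c i).Reachable x y) : x = y := by
  classical
  -- Each vertex is labelled by the centre of its colour-`i` star, or by `w` if it has none.
  let lab : V → V := fun v =>
    if v ∈ X then v else if h : ∃ u ∈ X, G.Adj v u ∧ c s(v, u) = i then h.choose else w
  have lab_of_mem : ∀ v ∈ X, lab v = v := fun v hv => if_pos hv
  have lab_of_adj : ∀ v ∉ X, ∀ u ∈ X, G.Adj v u → c s(v, u) = i → lab v = u := by
    intro v hv u hu hvu hcu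
    have hex : ∃ u ∈ X, G.Adj v u ∧ c s(v, u) = i := ⟨u, hu, hvu, hcu⟩
    obtain ⟨hu', hvu', hcu'⟩ := hex.choose_spec
    simp only [lab, if_neg hv, dif_pos hex]
    exact hc.toX_injOn v hv ⟨hu', hvu'⟩ ⟨hu, hvu⟩ (hcu'.trans hcu.symm)
  have lab_of_not : ∀ v ∉ X, (¬ ∃ u ∈ X, G.Adj v u ∧ c s(v, u) = i) → lab v = w :=
    fun v hv hno => by simp only [lab, if_neg hv, dif_neg hno]
  have lab_adj : ∀ a b, (monoSub G c i).Adj a b → lab a = lab b := by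
    rintro a b ⟨hab, hci⟩
    by_cases ha : a ∈ X <;> by_cases hb : b ∈ X
    · exact absurd hab (hX a ha b hb)
    · rw [lab_of_mem a ha, lab_of_adj b hb a ha hab.symm (Sym2.eq_swap ▸ hci)]
    · rw [lab_of_mem b hb, lab_of_adj a ha b hb hab hci]
    · have hi : i = Fin.last n := hci ▸ hc.outside a b ha hb hab
      have hno : ∀ v ∉ X, ¬ ∃ u ∈ X, G.Adj v u ∧ c s(v, u) = i :=
        fun v hv ⟨u, hu, hvu, hcu⟩ => hc.toX_ne_last v hv u hu hvu (hcu.trans hi)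
      rw [lab_of_not a ha (hno a ha), lab_of_not b hb (hno b hb)]
  have lab_fix : ∀ z, z = w ∨ z ∈ X → lab z = z := by
    rintro z (rfl | hz)
    · exact lab_of_not z hw fun ⟨u, hu, hzu, _⟩ => hwX u hu hzu
    · exact lab_of_mem z hz
  rw [← lab_fix x hx, ← lab_fix y hy]
  exact h.apply_eq_of_forall_adj lab lab_adj

theorem Finset.exists_injOn_ne_last {α : Type*} (t : Finset α) {n : ℕ} (hn : t.card ≤ n) :
    ∃ f : α → Fin (n + 1), Set.InjOn f t ∧ ∀ a ∈ t, f a ≠ Fin.last n := by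
  classical
  let f : α → Fin (n + 1) := fun a =>
    if h : a ∈ t then (Fin.castLE hn (t.equivFin ⟨a, h⟩)).castSucc else Fin.last n
  refine ⟨f, fun a ha b hb hab => ?_, fun a ha => ?_⟩
  · simp only [f, dif_pos (Finset.mem_coe.1 ha), dif_pos (Finset.mem_coe.1 hb)] at hab
    simpa using t.equivFin.injective (Fin.castLE_injective hn (Fin.castSucc_injective n hab))
  · simp only [f, dif_pos ha]
    exact Fin.castSucc_ne_last _

theorem exists_isStarForestColoring (G : SimpleGraph V) [DecidableRel G.Adj] (X : Finset V)
    (n : ℕ) (hdeg : ∀ v ∉ X, (X.filter (G.Adj v)).card ≤ n) :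
    ∃ c : Sym2 V → Fin (n + 1), IsStarForestColoring G X c := by
  classical
  choose! g hg_inj hg_ne using fun v hv => (X.filter (G.Adj v)).exists_injOn_ne_last (hdeg v hv)
  let f : V → V → Fin (n + 1) := fun a b =>
    if b ∈ X ∧ a ∉ X then g a b else if a ∈ X ∧ b ∉ X then g b a else Fin.last n
  have hf : ∀ a b, f a b = f b a := fun a b => by
    by_cases ha : a ∈ X <;> by_cases hb : b ∈ X <;> simp [f, ha, hb]
  have hf_toX : ∀ v ∉ X, ∀ u ∈ X, f v u = g v u := fun v hv u hu => by simp [f, hv, hu]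
  refine ⟨Sym2.lift ⟨f, hf⟩, ⟨fun a b ha hb _ => by simp_all [f], ?_, ?_⟩⟩
  · intro v hv u hu hvu
    rw [Sym2.lift_mk, Subtype.coe_mk, hf_toX v hv u hu]
    exact hg_ne v hv u (Finset.mem_filter.2 ⟨hu, hvu⟩)
  · intro v hv u ⟨hu, hvu⟩ u' ⟨hu', hvu'⟩ h
    simp only [Sym2.lift_mk, hf_toX v hv u hu, hf_toX v hv u' hu'] at h
    exact hg_inj v hv (by simpa using ⟨hu, hvu⟩) (by simpa using ⟨hu', hvu'⟩) h

end

theorem stmt1_general {V : Type*} (r s : ℕ) (hr : 1 ≤ r)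
    (G : SimpleGraph V) (X : Finset V)
    (hcard : X.card = s)
    (hindep : ∀ u ∈ X, ∀ v ∈ X, ¬ G.Adj u v)
    (hdeg : ∀ v, v ∉ X → ({u : V | u ∈ X ∧ G.Adj v u}.ncard ≤ r - 1))
    (hnotdom : ∃ v, v ∉ X ∧ ∀ u ∈ X, ¬ G.Adj v u) :
    ∃ c : Sym2 V → Fin r, ¬ HasMonoCover G c s := by
  classical
  obtain ⟨n, rfl⟩ : ∃ n, r = n + 1 := ⟨r - 1, by omega⟩
  obtain ⟨w, hw, hwX⟩ := hnotdom
  have hdeg' : ∀ v ∉ X, (X.filter (G.Adj v)).card ≤ n := fun v hv => by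
    simpa [← Set.ncard_coe_finset, Finset.coe_filter] using hdeg v hv
  obtain ⟨c, hc⟩ := exists_isStarForestColoring G X n hdeg'
  refine ⟨c, fun hcover => ?_⟩
  have hcount := card_le_of_hasMonoCover (insert w X) (fun i x hx y hy =>
    hc.eq_of_reachable hindep hw hwX i (Finset.mem_insert.1 hx) (Finset.mem_insert.1 hy)) hcover
  rw [Finset.card_insert_of_notMem hw, hcard] at hcount
  omega

/-- Observation: a sparse independent non-dominating set of size s forces tc_r(G) > s. -/
theorem stmt1 {V : Type*} [Fintype V] (r s : ℕ) (hr : 1 ≤ r) (hrs : r ≤ s)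
    (G : SimpleGraph V) (X : Finset V)
    (hcard : X.card = s)
    (hindep : ∀ u ∈ X, ∀ v ∈ X, ¬ G.Adj u v)
    (hdeg : ∀ v, v ∉ X → ({u : V | u ∈ X ∧ G.Adj v u}.ncard ≤ r - 1))
    (hnotdom : ∃ v, v ∉ X ∧ ∀ u ∈ X, ¬ G.Adj v u) :
    ∃ c : Sym2 V → Fin r, ¬ HasMonoCover G c s :=
  stmt1_general r s hr G X hcard hindep hdeg hnotdom
end

section
/- Let r ≥ 1 and let G be a (multi)graph. For every r-edge-coloring of G, the vertex set of G can be covered by at most r·α(G) monochromatic connected subgraphs, i.e., tc_r(G) ≤ r·α(G). -/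
open SimpleGraph

/-!
Take a maximum independent set `S`. By maximality it dominates `G`: every vertex lies in `S` or
has a neighbour in `S`. The monochromatic components of all `r` colors through the vertices of
`S` are `r · |S| = r · α(G)` connected subgraphs, and a vertex `u` adjacent to `v ∈ S` lies in the
component of `v` in the color of the edge `uv`.
-/

namespace SimpleGraph

variable {V : Type*} {G : SimpleGraph V}

theorem indepNum'_eq_indepNum (G : SimpleGraph V) : indepNum' G = G.indepNum := by
  unfold indepNum' indepNum
  congr 1
  ext k
  simp only [isNIndepSet_iff, isIndepSet_iff, Set.Pairwise, Finset.mem_coe, and_comm]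

theorem exists_adj_mem_of_maximal_isIndepSet {S : Set V} (hS : Maximal G.IsIndepSet S) (u : V) :
    u ∈ S ∨ ∃ v ∈ S, G.Adj u v := by
  by_contra! ⟨huS, hnadj⟩
  have hins : G.IsIndepSet (insert u S) :=
    hS.prop.insert fun v hv _ => ⟨hnadj v hv, fun hvu => hnadj v hv hvu.symm⟩
  exact huS (hS.2 hins (Set.subset_insert u S) (Set.mem_insert u S))

end SimpleGraph

section MonoCover

variable {V : Type*} {G : SimpleGraph V} {r : ℕ} {c : Sym2 V → Fin r}

theorem hasMonoCover_of_fintype {ι : Type*} [Fintype ι] (f : ι → Set V) (col : ι → Fin r)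
    (hconn : ∀ j, ((monoSub G c (col j)).induce (f j)).Connected) (hcover : ⋃ j, f j = Set.univ) :
    HasMonoCover G c (Fintype.card ι) := by
  let e := Fintype.equivFin ι
  refine ⟨_, le_rfl, f ∘ e.symm, col ∘ e.symm, fun j => hconn _, ?_⟩
  rw [← hcover]
  exact e.symm.surjective.iUnion_comp f

theorem hasMonoCover_of_dominating (S : Finset V) (hS : ∀ u, u ∈ S ∨ ∃ v ∈ S, G.Adj u v) :
    HasMonoCover G c (r * S.card) := by
  have hcard : Fintype.card (Fin r × S) = r * S.card := by simp
  rw [← hcard]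
  refine hasMonoCover_of_fintype
    (fun p => ((monoSub G c p.1).connectedComponentMk p.2).supp) Prod.fst
    (fun p => ConnectedComponent.connected_toSimpleGraph _) ?_
  refine Set.eq_univ_of_forall fun u => Set.mem_iUnion.mpr ?_
  rcases hS u with hu | ⟨v, hv, hadj⟩
  · -- any color will do for a vertex of `S`; the loop `s(u, u)` supplies one
    exact ⟨(c s(u, u), ⟨u, hu⟩), rfl⟩
  · have huv : (monoSub G c (c s(u, v))).Adj u v := ⟨hadj, rfl⟩
    exact ⟨(c s(u, v), ⟨v, hv⟩), ConnectedComponent.sound huv.reachable⟩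

end MonoCover

theorem stmt2_general {V : Type*} [Fintype V] (r : ℕ) (G : SimpleGraph V)
    (c : Sym2 V → Fin r) :
    HasMonoCover G c (r * indepNum' G) := by
  obtain ⟨S, hS⟩ := G.maximumIndepSet_exists
  rw [G.indepNum'_eq_indepNum, ← maximumIndepSet_card_eq_indepNum S hS]
  exact hasMonoCover_of_dominating S
    (exists_adj_mem_of_maximal_isIndepSet (hS.isMaximalIndepSet S))

/-- For every r-edge-coloring, V(G) can be covered by at most r·α(G) monochromatic
connected subgraphs. -/
theorem stmt2 {V : Type*} [Fintype V] (r : ℕ) (hr : 1 ≤ r) (G : SimpleGraph V)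
    (c : Sym2 V → Fin r) :
    HasMonoCover G c (r * indepNum' G) :=
  stmt2_general r G c
end

section
/- Let k ≥ 2 and let G be a bipartite graph with parts Y and Z such that every vertex v ∈ Z satisfies deg(v, Y) > k·log|Z|. Then for every k-coloring of the edges of G, there exists a partition {Y_1, ..., Y_k} of Y (parts possibly empty) such that for every v ∈ Z there exists i ∈ [k] with N_i(v) ∩ Y_i ≠ ∅, where N_i(v) denotes the neighbors of v joined to v by an edge of color i. -/
open Finset in
lemma stmt4_key (k n d m : ℕ) (hk : 2 ≤ k) (hn : 1 ≤ n) (hdm : d ≤ m)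
    (h : (k : ℝ) * Real.log n < d) :
    (n : ℝ) * (((k : ℝ) - 1) ^ d * (k : ℝ) ^ (m - d)) < (k : ℝ) ^ m := by
  have hk0 : (0:ℝ) < k := by positivity
  have hk1 : (1:ℝ) ≤ (k:ℝ) - 1 := by
    have : (2:ℝ) ≤ k := by exact_mod_cast hk
    linarith
  have hk1' : (0:ℝ) < (k:ℝ) - 1 := by linarith
  have hfrac : (0:ℝ) < (k:ℝ) / ((k:ℝ) - 1) := by positivity
  have hone : (1:ℝ) - 1/(k:ℝ) = ((k:ℝ)-1)/k := by field_simp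
  have hone0 : (0:ℝ) < 1 - 1/(k:ℝ) := by rw [hone]; positivity
  have hexp : (1:ℝ) - 1/(k:ℝ) ≤ Real.exp (-(1/k)) := by
    have := Real.add_one_le_exp (-(1/(k:ℝ))); linarith
  have hlog1 : Real.log (1 - 1/(k:ℝ)) ≤ -(1/k) := by
    calc Real.log (1 - 1/(k:ℝ)) ≤ Real.log (Real.exp (-(1/k))) :=
          Real.log_le_log hone0 hexp
      _ = -(1/k) := Real.log_exp _
  have heq : (k:ℝ) / ((k:ℝ) - 1) = ((1:ℝ) - 1/(k:ℝ))⁻¹ := by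
    rw [hone]; rw [inv_div]
  have hlog : (1:ℝ)/k ≤ Real.log ((k:ℝ)/((k:ℝ)-1)) := by
    rw [heq, Real.log_inv]; linarith
  have hlogn : Real.log n < d * Real.log ((k:ℝ)/((k:ℝ)-1)) := by
    have h1 : Real.log n < d / k := by
      rw [lt_div_iff₀ hk0]; linarith [h]
    have h2 : (d:ℝ) / k ≤ d * Real.log ((k:ℝ)/((k:ℝ)-1)) := by
      have := mul_le_mul_of_nonneg_left hlog (by positivity : (0:ℝ) ≤ (d:ℝ))
      calc (d:ℝ)/k = d * (1/k) := by ring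
        _ ≤ _ := this
    linarith
  have hn0 : (0:ℝ) < n := by exact_mod_cast hn
  have hnlt : (n:ℝ) < ((k:ℝ)/((k:ℝ)-1)) ^ d := by
    calc (n:ℝ) = Real.exp (Real.log n) := (Real.exp_log hn0).symm
      _ < Real.exp (d * Real.log ((k:ℝ)/((k:ℝ)-1))) := Real.exp_lt_exp.mpr hlogn
      _ = Real.exp (Real.log ((k:ℝ)/((k:ℝ)-1))) ^ d := Real.exp_nat_mul _ d
      _ = ((k:ℝ)/((k:ℝ)-1)) ^ d := by rw [Real.exp_log hfrac]
  have hmain : (n:ℝ) * ((k:ℝ)-1) ^ d < (k:ℝ) ^ d := by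
    have := mul_lt_mul_of_pos_right hnlt (by positivity : (0:ℝ) < ((k:ℝ)-1)^d)
    calc (n:ℝ) * ((k:ℝ)-1) ^ d < ((k:ℝ)/((k:ℝ)-1)) ^ d * ((k:ℝ)-1)^d := this
      _ = (((k:ℝ)/((k:ℝ)-1)) * ((k:ℝ)-1)) ^ d := (mul_pow _ _ _).symm
      _ = (k:ℝ) ^ d := by rw [div_mul_cancel₀]; exact ne_of_gt hk1'
  have hpowm : (k:ℝ) ^ m = (k:ℝ) ^ d * (k:ℝ) ^ (m - d) := by
    rw [← pow_add, Nat.add_sub_cancel' hdm]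
  rw [hpowm, ← mul_assoc]
  exact mul_lt_mul_of_pos_right hmain (by positivity)


/-- Lemma: if every vertex of Z has more than k·log|Z| neighbors in Y, then for every
k-coloring of the edges there is a partition {Y_1,…,Y_k} of Y (given by the fibers of f)
such that every z ∈ Z has a neighbor of color i inside Y_i for some i. -/
theorem stmt4 {Y Z : Type*} [Fintype Y] [Fintype Z] (k : ℕ) (hk : 2 ≤ k)
    (E : Y → Z → Prop) (col : Y → Z → Fin k)
    (hdeg : ∀ z : Z, (k : ℝ) * Real.log (Fintype.card Z) < ({y : Y | E y z}.ncard : ℝ)) :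
    ∃ f : Y → Fin k, ∀ z : Z, ∃ y : Y, E y z ∧ col y z = f y := by
  classical
  have hkpos : 0 < k := by omega
  rcases Nat.eq_zero_or_pos (Fintype.card Z) with hZ | hZ
  · have : IsEmpty Z := Fintype.card_eq_zero_iff.mp hZ
    exact ⟨fun _ => ⟨0, hkpos⟩, fun z => this.elim z⟩
  set n := Fintype.card Z with hn
  set m := Fintype.card Y with hm
  by_contra hcon
  push_neg at hcon
  set Bad : Z → Finset (Y → Fin k) :=
    fun z => Finset.univ.filter (fun f => ∀ y, E y z → ¬ (col y z = f y)) with hBad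
  have hcover : (Finset.univ : Finset (Y → Fin k)) ⊆ Finset.univ.biUnion Bad := by
    intro f _
    obtain ⟨z, hz⟩ := hcon f
    refine Finset.mem_biUnion.mpr ⟨z, Finset.mem_univ _, ?_⟩
    simp only [hBad, Finset.mem_filter, Finset.mem_univ, true_and]
    intro y hy heq
    exact hz y hy heq
  set deg : Z → ℕ := fun z => (Finset.univ.filter (fun y => E y z)).card with hdegdef
  have hncard : ∀ z, ({y : Y | E y z}.ncard : ℝ) = (deg z : ℝ) := by
    intro z
    congr 1
    rw [Set.ncard_eq_toFinset_card']
    simp [hdegdef, Set.toFinset_setOf]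
  have hdm : ∀ z, deg z ≤ m := fun z => by
    simpa [hm] using Finset.card_filter_le Finset.univ (fun y => E y z)
  have hcard : ∀ z, (Bad z).card = (k-1) ^ (deg z) * k ^ (m - deg z) := by
    intro z
    have h1 : (Bad z).card = Fintype.card {f : Y → Fin k // ∀ y, E y z → ¬ (col y z = f y)} := by
      rw [Fintype.card_subtype]
    have h2 : Fintype.card {f : Y → Fin k // ∀ y, E y z → ¬ (col y z = f y)}
        = ∏ y : Y, Fintype.card {c : Fin k // E y z → ¬ (col y z = c)} := by
      rw [Fintype.card_congr (Equiv.subtypePiEquivPi (p := fun y c => E y z → ¬ (col y z = c)))]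
      rw [Fintype.card_pi]
    have h3 : ∀ y : Y, Fintype.card {c : Fin k // E y z → ¬ (col y z = c)}
        = if E y z then k - 1 else k := by
      intro y
      by_cases hE : E y z
      · rw [if_pos hE]
        have he : Fintype.card {c : Fin k // E y z → ¬ (col y z = c)}
            = Fintype.card {c : Fin k // ¬ (c = col y z)} := by
          apply Fintype.card_congr
          apply Equiv.subtypeEquivRight
          intro c
          constructor
          · intro h hc; exact h hE hc.symm
          · intro h _ hc; exact h hc.symm
        rw [he, Fintype.card_subtype_compl]
        simp [Fintype.card_subtype_eq]
      · rw [if_neg hE]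
        have he : Fintype.card {c : Fin k // E y z → ¬ (col y z = c)}
            = Fintype.card (Fin k) := by
          apply Fintype.card_congr
          apply Equiv.subtypeUnivEquiv
          intro c h; exact absurd h hE
        simpa using he
    rw [h1, h2]
    simp_rw [h3]
    rw [Finset.prod_ite]
    simp only [Finset.prod_const]
    have hc2 : (Finset.univ.filter (fun y : Y => ¬ E y z)).card = m - deg z := by
      have := Finset.card_filter_add_card_filter_not (s := (Finset.univ : Finset Y))
        (fun y : Y => E y z)
      simp only [Finset.card_univ, ← hm] at this
      have hdz : deg z = (Finset.univ.filter (fun y => E y z)).card := rfl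
      rw [hdz]
      exact Nat.eq_sub_of_add_eq' this
    rw [hc2]
  -- real bound per z
  have hzlt : ∀ z, ((Bad z).card : ℝ) < (k:ℝ) ^ m / n := by
    intro z
    have hkey := stmt4_key k n (deg z) m hk hZ (hdm z) (by
      have := hdeg z; rw [hncard z] at this; exact this)
    have hcast : ((Bad z).card : ℝ) = ((k:ℝ) - 1) ^ (deg z) * (k:ℝ) ^ (m - deg z) := by
      rw [hcard z]
      push_cast [Nat.cast_sub (by omega : 1 ≤ k)]
      ring
    rw [hcast]
    rw [lt_div_iff₀ (by positivity : (0:ℝ) < (n:ℝ))]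
    linarith [hkey]
  have hsum1 : ((k:ℝ)) ^ m ≤ ∑ z : Z, ((Bad z).card : ℝ) := by
    have h1 : (Finset.univ : Finset (Y → Fin k)).card ≤ ∑ z : Z, (Bad z).card :=
      le_trans (Finset.card_le_card hcover) (Finset.card_biUnion_le)
    have h2 : (Finset.univ : Finset (Y → Fin k)).card = k ^ m := by
      simp [Finset.card_univ, hm]
    rw [h2] at h1
    exact_mod_cast h1
  have hne : (Finset.univ : Finset Z).Nonempty := by
    rw [← Finset.card_pos]; simpa using hZ
  have hsum2 : ∑ z : Z, ((Bad z).card : ℝ) < ∑ _z : Z, ((k:ℝ) ^ m / n) :=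
    Finset.sum_lt_sum_of_nonempty hne (fun z _ => hzlt z)
  have hsum3 : ∑ _z : Z, ((k:ℝ) ^ m / n) = (k:ℝ) ^ m := by
    rw [Finset.sum_const, Finset.card_univ, ← hn, nsmul_eq_mul]
    field_simp
  linarith
end

section
/- Let 0 < α ≤ 1 and let n_0 = (12/α²)·log(6/α²). Let G be a graph on n ≥ n_0 vertices. If there exists a vertex x ∈ V(G) such that every vertex v ∈ V(G) satisfies deg(v, N(x)) ≥ α·n, then G has a spanning tree with at least n − (2/α)·log(n) leaves. -/
/-!
By averaging, some vertex of `N(x)` is adjacent to an `α`-fraction of any given set of vertices,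
so greedily chosen vertices of `N(x)` shrink the undominated set by a factor `1 - α ≤ e^{-α}`
each, and about `log n / α` of them dominate the whole graph. Together with `x` they form a
connected dominating set `C`; attaching every vertex outside `C` to one neighbour in `C` and
taking a spanning tree makes all of those vertices leaves.
-/

open SimpleGraph Finset Real

namespace Finset

variable {ι β : Type*} (r : ι → β → Prop) [∀ a b, Decidable (r a b)] {α : ℝ} {A : Finset ι}

theorem exists_mem_mul_card_le_card_filter (hA : A.Nonempty)
    (hdeg : ∀ b, α * #A ≤ #{a ∈ A | r a b}) (U : Finset β) :
    ∃ a ∈ A, α * #U ≤ #{b ∈ U | r a b} := by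
  refine exists_le_of_sum_le hA ?_
  calc ∑ _ ∈ A, α * #U = ∑ _ ∈ U, α * #A := by simp only [sum_const, nsmul_eq_mul]; ring
    _ ≤ ∑ b ∈ U, (#{a ∈ A | r a b} : ℝ) := sum_le_sum fun b _ => hdeg b
    _ = ∑ a ∈ A, (#{b ∈ U | r a b} : ℝ) := by
      exact_mod_cast (sum_card_bipartiteAbove_eq_sum_card_bipartiteBelow r).symm

/-- Each greedy choice leaves at most a `1 - α ≤ exp (-α)` fraction of `U` uncovered. -/
theorem exists_subset_card_le_card_filter_le_mul_exp [DecidableEq ι] (hA : A.Nonempty)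
    (hdeg : ∀ b, α * #A ≤ #{a ∈ A | r a b}) (k : ℕ) (U : Finset β) :
    ∃ S ⊆ A, #S ≤ k ∧ (#{b ∈ U | ∀ a ∈ S, ¬ r a b} : ℝ) ≤ #U * exp (-(α * k)) := by
  induction k generalizing U with
  | zero => exact ⟨∅, empty_subset _, by simp, by simp⟩
  | succ k ih =>
    obtain ⟨a, haA, ha⟩ := exists_mem_mul_card_le_card_filter r hA hdeg U
    obtain ⟨S, hSA, hSk, hS⟩ := ih {b ∈ U | ¬ r a b}
    refine ⟨insert a S, insert_subset haA hSA, (card_insert_le a S).trans (by omega), ?_⟩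
    have huncovered : {b ∈ U | ∀ a' ∈ insert a S, ¬ r a' b} =
        {b ∈ {b ∈ U | ¬ r a b} | ∀ a' ∈ S, ¬ r a' b} := by
      ext b
      simp only [mem_filter, mem_insert, forall_eq_or_imp]
      tauto
    have hleft : (#{b ∈ U | ¬ r a b} : ℝ) ≤ #U * exp (-α) := by
      have hsplit := card_filter_add_card_filter_not (s := U) (p := r a)
      have hexp := add_one_le_exp (-α)
      have hU : (0 : ℝ) ≤ #U := by positivity
      have : (#{b ∈ U | ¬ r a b} : ℝ) = #U - #{b ∈ U | r a b} := by
        rw [← hsplit]; push_cast; ring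
      nlinarith
    calc (#{b ∈ U | ∀ a' ∈ insert a S, ¬ r a' b} : ℝ)
        ≤ #{b ∈ U | ¬ r a b} * exp (-(α * k)) := huncovered ▸ hS
      _ ≤ #U * exp (-α) * exp (-(α * k)) := by gcongr
      _ = #U * exp (-(α * ↑(k + 1))) := by
        rw [mul_assoc, ← exp_add]; push_cast; ring_nf

end Finset

namespace SimpleGraph

variable {V : Type*} {G : SimpleGraph V}

theorem induce_insert_connected_of_forall_adj {x : V} {s : Set V} (hs : ∀ y ∈ s, G.Adj x y) :
    (G.induce (insert x s)).Connected := by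
  refine G.induce_connected_of_patches x (Set.mem_insert x s) fun {v} hv => ?_
  rcases hv with rfl | hvs
  · exact ⟨_, subset_rfl, Set.mem_insert v s, Set.mem_insert v s, Reachable.rfl⟩
  · exact ⟨{x, v}, Set.insert_subset_insert (Set.singleton_subset_iff.mpr hvs),
      Set.mem_insert x _, Set.mem_insert_of_mem x rfl,
      (induce_pair_connected_of_adj (hs v hvs)).preconnected _ _⟩

theorem exists_isTree_le_forall_notMem_ncard_neighborSet_eq_one {C : Set V}
    (hC : (G.induce C).Connected) (hdom : ∀ v ∉ C, ∃ c ∈ C, G.Adj v c) :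
    ∃ T ≤ G, T.IsTree ∧ ∀ v ∉ C, (T.neighborSet v).ncard = 1 := by
  choose p hpC hpadj using hdom
  -- keep the edges inside `C` and one edge from each vertex outside `C` into `C`
  let H : SimpleGraph V :=
    fromRel fun a b => G.Adj a b ∧ (a ∈ C ∧ b ∈ C ∨ ∃ ha : a ∉ C, b = p a ha)
  have hHG : H ≤ G := by
    rintro a b ⟨-, ⟨hab, -⟩ | ⟨hba, -⟩⟩
    exacts [hab, hba.symm]
  have hH_adj_notMem {v w : V} (hv : v ∉ C) (h : H.Adj v w) : w = p v hv := by
    obtain ⟨-, ⟨-, ⟨hvC, -⟩ | ⟨-, rfl⟩⟩ | ⟨-, ⟨-, hvC⟩ | ⟨hw, rfl⟩⟩⟩ := h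
    exacts [absurd hvC hv, rfl, absurd hvC hv, absurd (hpC w hw) hv]
  have hreach_C {a b : V} (ha : a ∈ C) (hb : b ∈ C) : H.Reachable a b := by
    let f : G.induce C →g H :=
      ⟨Subtype.val, fun {a b} h => ⟨fun e => h.ne (Subtype.ext e), Or.inl ⟨h, Or.inl ⟨a.2, b.2⟩⟩⟩⟩
    exact (hC.preconnected ⟨a, ha⟩ ⟨b, hb⟩).map f
  obtain ⟨c, hc⟩ := hC.nonempty
  have hreach (v : V) : H.Reachable v c := by
    by_cases hv : v ∈ C
    · exact hreach_C hv hc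
    · have hadj : H.Adj v (p v hv) :=
        ⟨(hpadj v hv).ne, Or.inl ⟨hpadj v hv, Or.inr ⟨hv, rfl⟩⟩⟩
      exact hadj.reachable.trans (hreach_C (hpC v hv) hc)
  have hH : H.Connected :=
    (connected_iff_exists_forall_reachable H).mpr ⟨c, fun v => (hreach v).symm⟩
  obtain ⟨T, hTH, hT⟩ := hH.exists_isTree_le
  refine ⟨T, hTH.trans hHG, hT, fun v hv => Set.ncard_eq_one.mpr ⟨p v hv, ?_⟩⟩
  have : Nontrivial V := ⟨v, p v hv, (hpadj v hv).ne⟩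
  obtain ⟨w, hw⟩ := T.mem_support.mp (hT.connected.preconnected.support_eq_univ ▸ Set.mem_univ v)
  have hTp : T.Adj v (p v hv) := hH_adj_notMem hv (hTH hw) ▸ hw
  ext w'
  exact ⟨fun h => hH_adj_notMem hv (hTH h), fun h => h ▸ hTp⟩

theorem exists_isTree_le_card_sub_ncard_le_ncard_leaves [Finite V] {C : Set V}
    (hC : (G.induce C).Connected) (hdom : ∀ v ∉ C, ∃ c ∈ C, G.Adj v c) :
    ∃ T ≤ G, T.IsTree ∧
      (Nat.card V : ℝ) - C.ncard ≤ {v | (T.neighborSet v).ncard = 1}.ncard := by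
  obtain ⟨T, hTG, hT, hleaf⟩ := exists_isTree_le_forall_notMem_ncard_neighborSet_eq_one hC hdom
  refine ⟨T, hTG, hT, ?_⟩
  have hcompl : Cᶜ.ncard ≤ {v | (T.neighborSet v).ncard = 1}.ncard :=
    Set.ncard_le_ncard fun v hv => hleaf v hv
  rw [← Set.ncard_add_ncard_compl C]
  push_cast
  linarith [(Nat.cast_le (α := ℝ)).mpr hcompl]

theorem exists_connected_dominating_ncard_le [Fintype V] {α : ℝ} (hα0 : 0 < α) {x : V}
    (hx : ∀ v, α * Fintype.card V ≤ (({w | G.Adj x w} ∩ {w | G.Adj v w}).ncard : ℝ)) {k : ℕ}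
    (hk : Fintype.card V * exp (-(α * k)) < 1) :
    ∃ C : Set V, (G.induce C).Connected ∧ (∀ v ∉ C, ∃ c ∈ C, G.Adj v c) ∧ C.ncard ≤ k + 1 := by
  classical
  let A : Finset V := {w | G.Adj x w}
  have hcommon (v : V) : ({w | G.Adj x w} ∩ {w | G.Adj v w}).ncard = #{w ∈ A | G.Adj w v} := by
    rw [← Set.ncard_coe_finset]; congr 1; ext w; simp [A, G.adj_comm w v]
  have hA (v : V) : α * #A ≤ #{w ∈ A | G.Adj w v} :=
    (mul_le_mul_of_nonneg_left (mod_cast card_le_univ A) hα0.le).trans (hcommon v ▸ hx v)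
  have hn : (0 : ℝ) < Fintype.card V := mod_cast Fintype.card_pos_iff.mpr ⟨x⟩
  have hAne : A.Nonempty :=
    (card_pos.mp (mod_cast (mul_pos hα0 hn).trans_le (hcommon x ▸ hx x))).mono
      (filter_subset _ _)
  obtain ⟨S, hSA, hSk, hS⟩ := exists_subset_card_le_card_filter_le_mul_exp G.Adj hAne hA k univ
  rw [card_univ] at hS
  have huncovered := card_eq_zero.mp (Nat.cast_lt_one.mp (hS.trans_lt hk))
  refine ⟨insert x (S : Set V),
    induce_insert_connected_of_forall_adj fun y hy => by simpa [A] using hSA hy,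
    fun v _ => ?_, (Set.ncard_insert_le _ _).trans (by rw [Set.ncard_coe_finset]; omega)⟩
  obtain ⟨s, hs, hsv⟩ : ∃ s ∈ S, G.Adj s v := by
    simpa using eq_empty_iff_forall_notMem.mp huncovered v
  exact ⟨s, Set.mem_insert_of_mem x hs, hsv.symm⟩

end SimpleGraph

theorem two_le_log_of_twelve_div_sq_mul_log_le {α n : ℝ} (hα0 : 0 < α) (hα1 : α ≤ 1)
    (hn : 12 / α ^ 2 * log (6 / α ^ 2) ≤ n) : 2 ≤ log n := by
  have hα2 : 0 < α ^ 2 := by positivity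
  have hα21 : α ^ 2 ≤ 1 := pow_le_one₀ hα0.le hα1
  have h12 : 12 ≤ 12 / α ^ 2 := by rw [le_div_iff₀ hα2]; nlinarith
  have hlog6 : 1 ≤ log (6 / α ^ 2) := by
    rw [le_log_iff_exp_le (by positivity)]
    have : 6 ≤ 6 / α ^ 2 := by rw [le_div_iff₀ hα2]; nlinarith
    linarith [exp_one_lt_d9]
  have hn12 : 12 ≤ n := by nlinarith
  rw [le_log_iff_exp_le (by linarith), show (2 : ℝ) = 1 + 1 by norm_num, exp_add]
  nlinarith [exp_one_lt_d9, exp_pos 1]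

/-- The number `k = ⌊log n / α⌋₊ + 1` of greedy rounds: enough to bring `n e^{-αk}` below `1`,
and few enough once `log n ≥ 2α`. -/
theorem exists_nat_mul_exp_lt_one_and_add_one_le {α n : ℝ} (hα0 : 0 < α) (hn : 0 < n)
    (hlog : 2 * α ≤ log n) :
    ∃ k : ℕ, n * exp (-(α * k)) < 1 ∧ (k : ℝ) + 1 ≤ 2 / α * log n := by
  have hq : 2 ≤ log n / α := by rw [le_div_iff₀ hα0]; linarith
  refine ⟨⌊log n / α⌋₊ + 1, ?_, ?_⟩
  · have hk : log n < α * ↑(⌊log n / α⌋₊ + 1) := by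
      rw [← div_lt_iff₀' hα0]; push_cast; exact Nat.lt_floor_add_one _
    calc n * exp (-(α * ↑(⌊log n / α⌋₊ + 1))) < n * exp (-log n) := by gcongr
      _ = 1 := by rw [exp_neg, exp_log hn, mul_inv_cancel₀ hn.ne']
  · have := Nat.floor_le (by linarith : 0 ≤ log n / α)
    push_cast
    calc (⌊log n / α⌋₊ : ℝ) + 1 + 1 ≤ log n / α + log n / α := by linarith
      _ = 2 / α * log n := by ring

/-- If some vertex x satisfies that every vertex has at least αn neighbors in N(x),
then G has a spanning tree with at least n − (2/α)·log n leaves. -/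
theorem stmt6 {V : Type*} [Fintype V] (α : ℝ) (hα0 : 0 < α) (hα1 : α ≤ 1)
    (G : SimpleGraph V)
    (hn : (12 / α ^ 2) * Real.log (6 / α ^ 2) ≤ (Fintype.card V : ℝ))
    (hx : ∃ x : V, ∀ v : V, α * (Fintype.card V : ℝ) ≤ (({w | G.Adj x w} ∩ {w | G.Adj v w}).ncard : ℝ)) :
    ∃ T : SimpleGraph V, T ≤ G ∧ T.IsTree ∧
      (Fintype.card V : ℝ) - (2 / α) * Real.log (Fintype.card V) ≤
        ({v : V | {w | T.Adj v w}.ncard = 1}.ncard : ℝ) := by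
  obtain ⟨x, hx⟩ := hx
  have hn0 : (0 : ℝ) < Fintype.card V := mod_cast Fintype.card_pos_iff.mpr ⟨x⟩
  obtain ⟨k, hk_exp, hk_le⟩ := exists_nat_mul_exp_lt_one_and_add_one_le hα0 hn0
    (by linarith [two_le_log_of_twelve_div_sq_mul_log_le hα0 hα1 hn])
  obtain ⟨C, hC, hdom, hCk⟩ := exists_connected_dominating_ncard_le hα0 hx hk_exp
  obtain ⟨T, hTG, hT, hleaves⟩ := exists_isTree_le_card_sub_ncard_le_ncard_leaves hC hdom
  refine ⟨T, hTG, hT, ?_⟩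
  rw [Nat.card_eq_fintype_card] at hleaves
  have : (C.ncard : ℝ) ≤ k + 1 := mod_cast hCk
  exact le_trans (by linarith) hleaves
end

section
/- Let G be a graph on n ≥ 1 vertices with minimum degree δ(G) ≥ (2n−5)/3. Then for every 2-edge-coloring of G, the vertex set of G can be covered by the vertex sets of at most 2 monochromatic connected subgraphs, i.e., tc_2(G) ≤ 2. -/
open SimpleGraph

/-!
For a vertex `v` let `C₀(v)` and `C₁(v)` be its monochromatic components in the two colours.
Every neighbour of `v` lies in `C₀(v) ∪ C₁(v)` and `v` lies in both, so
`|C₀(v)| + |C₁(v)| ≥ deg v + 2`. Three vertices with pairwise distinct components in both colours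
would therefore give `2n ≥ 3δ + 6 > 2n`. Viewing each vertex `v` as the edge `C₀(v)C₁(v)` of a
bipartite multigraph on the components, this says there is no matching of size three, and a
Kőnig-type case analysis produces a vertex cover by two components.
-/

section TwoPartitions

variable {V : Type*} {W : Fin 2 → Type*} (κ : (d : Fin 2) → V → W d)

def Apart (x y : V) : Prop := κ 0 x ≠ κ 0 y ∧ κ 1 x ≠ κ 1 y

variable {κ}

lemma Apart.symm {x y : V} (h : Apart κ x y) : Apart κ y x := ⟨h.1.symm, h.2.symm⟩

variable (htriple : ∀ x y z, Apart κ x y → Apart κ x z → Apart κ y z → False)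
include htriple

lemma eq_or_eq_of_apart {x y : V} (hxy : Apart κ x y) (v : V) :
    κ 0 v = κ 0 x ∨ κ 1 v = κ 1 x ∨ κ 0 v = κ 0 y ∨ κ 1 v = κ 1 y := by
  by_contra! h
  exact htriple x y v hxy ⟨h.1.symm, h.2.1.symm⟩ ⟨h.2.2.1.symm, h.2.2.2.symm⟩

theorem exists_cover_of_not_apart_triple [Nonempty V] :
    ∃ d e u w, ∀ v, κ d v = κ d u ∨ κ e v = κ e w := by
  by_contra! hno
  obtain ⟨a⟩ := ‹Nonempty V›
  obtain ⟨b, hab⟩ : ∃ b, Apart κ a b := by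
    obtain ⟨b, hb₀, hb₁⟩ := hno 0 1 a a
    exact ⟨b, hb₀.symm, hb₁.symm⟩
  obtain ⟨p, hpa, hpb⟩ := hno 0 0 a b
  wlog hp : κ 1 p = κ 1 a generalizing a b
  · have hp' : κ 1 p = κ 1 b := by
      have := eq_or_eq_of_apart htriple hab p
      tauto
    exact this b a hab.symm hpb hpa hp'
  obtain ⟨q, hqa, hqb⟩ := hno 1 1 a b
  have hq : κ 0 q = κ 0 a ∨ κ 0 q = κ 0 b := by
    have := eq_or_eq_of_apart htriple hab q
    tauto
  rcases hq with hq | hq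
  · exact htriple q p b (by grind [Apart]) (by grind [Apart]) (by grind [Apart])
  have hpq : Apart κ p q := by grind [Apart]
  obtain ⟨s, hsa, hsb⟩ := hno 1 0 a b
  have hs₁ : κ 0 s = κ 0 a ∨ κ 1 s = κ 1 b := by
    have := eq_or_eq_of_apart htriple hab s
    tauto
  have hs₂ : κ 0 s = κ 0 p ∨ κ 1 s = κ 1 q := by
    have := eq_or_eq_of_apart htriple hpq s
    grind
  rcases hs₁ with hs₁ | hs₁ <;> rcases hs₂ with hs₂ | hs₂
  · exact hpa (hs₂ ▸ hs₁)
  · exact htriple s p b (by grind [Apart]) (by grind [Apart]) (by grind [Apart])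
  · exact htriple s q a (by grind [Apart]) (by grind [Apart]) (by grind [Apart])
  · exact hqb (hs₂ ▸ hs₁)

end TwoPartitions

section MonochromaticComponents

variable {V : Type*}

lemma ncard_supp_add_ncard_supp_add_ncard_supp_le [Finite V] {H : SimpleGraph V}
    {C₁ C₂ C₃ : H.ConnectedComponent} (h₁₂ : C₁ ≠ C₂) (h₁₃ : C₁ ≠ C₃) (h₂₃ : C₂ ≠ C₃) :
    C₁.supp.ncard + C₂.supp.ncard + C₃.supp.ncard ≤ Nat.card V := by
  have hdisj := H.pairwise_disjoint_supp_connectedComponent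
  rw [← Set.ncard_union_eq (hdisj h₁₂),
    ← Set.ncard_union_eq (Set.disjoint_union_left.2 ⟨hdisj h₁₃, hdisj h₂₃⟩)]
  exact Set.ncard_le_card _

abbrev monoComponent (G : SimpleGraph V) {r : ℕ} (c : Sym2 V → Fin r) (d : Fin r) (v : V) :
    (monoSub G c d).ConnectedComponent :=
  (monoSub G c d).connectedComponentMk v

lemma hasMonoCover_two_of_forall_eq_or_eq {G : SimpleGraph V} {r : ℕ} {c : Sym2 V → Fin r}
    {d e : Fin r} {u w : V}
    (h : ∀ v, monoComponent G c d v = monoComponent G c d u ∨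
      monoComponent G c e v = monoComponent G c e w) :
    HasMonoCover G c 2 := by
  refine ⟨2, le_rfl, ![(monoComponent G c d u).supp, (monoComponent G c e w).supp], ![d, e],
    fun j => ?_, ?_⟩
  · fin_cases j <;> exact ConnectedComponent.connected_toSimpleGraph _
  · ext v
    simpa [Fin.exists_fin_two] using h v

variable (G : SimpleGraph V) [Fintype V] [DecidableRel G.Adj]

lemma degree_add_le_sum_ncard_supp {r : ℕ} (c : Sym2 V → Fin r) (x : V) :
    G.degree x + r ≤ ∑ d, (monoComponent G c d x).supp.ncard := by
  have hsub : G.neighborSet x ⊆ ⋃ d ∈ Finset.univ, (monoComponent G c d x).supp \ {x} := by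
    intro v hv
    simp only [Set.mem_iUnion, Finset.mem_univ, exists_true_left]
    refine ⟨c s(x, v), ?_, G.ne_of_adj hv |>.symm⟩
    exact (ConnectedComponent.connectedComponentMk_eq_of_adj (G := monoSub G c _) ⟨hv, rfl⟩).symm
  have hdeg : (G.neighborSet x).ncard = G.degree x := by
    rw [Set.ncard_eq_toFinset_card', Set.toFinset_card, card_neighborSet_eq_degree]
  calc G.degree x + r
      ≤ ∑ d, ((monoComponent G c d x).supp \ {x}).ncard + r := by
        rw [← hdeg]
        grw [Set.ncard_le_ncard hsub, Finset.set_ncard_biUnion_le]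
    _ = ∑ d, (monoComponent G c d x).supp.ncard := by
        rw [← Finset.sum_congr rfl fun d _ => Set.ncard_sdiff_singleton_add_one
          (s := (monoComponent G c d x).supp) rfl]
        simp [Finset.sum_add_distrib]

lemma not_apart_triple (c : Sym2 V → Fin 2)
    (hδ : ∀ v, 2 * Fintype.card V ≤ 3 * G.degree v + 5) (x y z : V) :
    Apart (monoComponent G c) x y → Apart (monoComponent G c) x z →
      Apart (monoComponent G c) y z → False := by
  rintro ⟨hxy₀, hxy₁⟩ ⟨hxz₀, hxz₁⟩ ⟨hyz₀, hyz₁⟩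
  have h₀ := ncard_supp_add_ncard_supp_add_ncard_supp_le hxy₀ hxz₀ hyz₀
  have h₁ := ncard_supp_add_ncard_supp_add_ncard_supp_le hxy₁ hxz₁ hyz₁
  rw [Nat.card_eq_fintype_card] at h₀ h₁
  have hx := degree_add_le_sum_ncard_supp G c x
  have hy := degree_add_le_sum_ncard_supp G c y
  have hz := degree_add_le_sum_ncard_supp G c z
  simp only [Fin.sum_univ_two] at hx hy hz
  have := hδ x
  have := hδ y
  have := hδ z
  omega

end MonochromaticComponents

/-- If δ(G) ≥ (2n−5)/3 then tc_2(G) ≤ 2. -/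
theorem stmt9 {V : Type*} [Fintype V] (hn : 1 ≤ Fintype.card V)
    (G : SimpleGraph V) [DecidableRel G.Adj]
    (hδ : ∀ v : V, (2 * (Fintype.card V : ℝ) - 5) / 3 ≤ (G.degree v : ℝ))
    (c : Sym2 V → Fin 2) :
    HasMonoCover G c 2 := by
  have : Nonempty V := Fintype.card_pos_iff.mp hn
  have hδ' : ∀ v, 2 * Fintype.card V ≤ 3 * G.degree v + 5 := fun v => by
    have : (2 * Fintype.card V : ℝ) ≤ 3 * G.degree v + 5 := by linarith [hδ v]
    exact_mod_cast this
  obtain ⟨d, e, u, w, hcover⟩ := exists_cover_of_not_apart_triple (not_apart_triple G c hδ')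
  exact hasMonoCover_two_of_forall_eq_or_eq hcover
end

section
/- Let α > 0 and let H be a graph on k ≥ 2/√α vertices with at least (1−α)·(k choose 2) edges. Then there exists an induced subgraph H' of H with at least (1−√α)·k vertices and minimum degree δ(H') ≥ (1−2√α)·k. -/
open SimpleGraph Finset

private lemma degS_le {V : Type*} [DecidableEq V] (H : SimpleGraph V) [DecidableRel H.Adj]
    (S : Finset V) (u : V) (hu : u ∈ S) :
    (S.filter (fun w => H.Adj u w)).card ≤ S.card - 1 := by
  have hsub : S.filter (fun w => H.Adj u w) ⊆ S.erase u := by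
    intro w hw
    simp only [mem_filter] at hw
    exact Finset.mem_erase.2 ⟨fun h => H.irrefl (h ▸ hw.2), hw.1⟩
  calc (S.filter (fun w => H.Adj u w)).card ≤ (S.erase u).card := Finset.card_le_card hsub
    _ = S.card - 1 := Finset.card_erase_of_mem hu

private lemma sum_deg_erase {V : Type*} [DecidableEq V] (H : SimpleGraph V) [DecidableRel H.Adj]
    (S : Finset V) (v : V) (hv : v ∈ S) :
    ∑ u ∈ S, (S.filter (fun w => H.Adj u w)).card
      = (∑ u ∈ S.erase v, ((S.erase v).filter (fun w => H.Adj u w)).card)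
        + 2 * (S.filter (fun w => H.Adj v w)).card := by
  have h1 : ∀ u ∈ S.erase v, (S.filter (fun w => H.Adj u w)).card
      = ((S.erase v).filter (fun w => H.Adj u w)).card + (if H.Adj u v then 1 else 0) := by
    intro u _
    rw [Finset.filter_erase]
    by_cases h : H.Adj u v
    · rw [if_pos h]
      have hmem : v ∈ S.filter (fun w => H.Adj u w) := by simp [hv, h]
      rw [Finset.card_erase_of_mem hmem]
      have : 0 < (S.filter (fun w => H.Adj u w)).card := Finset.card_pos.2 ⟨v, hmem⟩
      omega
    · rw [if_neg h, Finset.erase_eq_of_notMem (by simp [h]), Nat.add_zero]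
  have h2 : ∑ u ∈ S.erase v, (if H.Adj u v then 1 else 0)
      = (S.filter (fun w => H.Adj v w)).card := by
    rw [← Finset.sum_filter]
    have : (S.erase v).filter (fun u => H.Adj u v) = S.filter (fun w => H.Adj v w) := by
      rw [Finset.filter_erase]
      rw [Finset.erase_eq_of_notMem (by simp [H.irrefl])]
      exact Finset.filter_congr (fun x _ => by rw [H.adj_comm])
    rw [this]
    simp
  calc ∑ u ∈ S, (S.filter (fun w => H.Adj u w)).card
      = (S.filter (fun w => H.Adj v w)).card
        + ∑ u ∈ S.erase v, (S.filter (fun w => H.Adj u w)).card :=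
        (Finset.add_sum_erase S _ hv).symm
    _ = (S.filter (fun w => H.Adj v w)).card
        + ∑ u ∈ S.erase v, (((S.erase v).filter (fun w => H.Adj u w)).card
            + (if H.Adj u v then 1 else 0)) := by rw [Finset.sum_congr rfl h1]
    _ = _ := by rw [Finset.sum_add_distrib, h2]; ring

private lemma aux {V : Type*} [Fintype V] [DecidableEq V] (H : SimpleGraph V)
    [DecidableRel H.Adj] (β : ℝ) (k : ℝ) (hβ : 0 < β) (hβk : 2 ≤ β * k)
    (hkcard : k = (Fintype.card V : ℝ)) :
    ∀ n (S : Finset V), S.card = n →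
      ((S.card : ℝ) * ((S.card : ℝ) - 1) - ∑ v ∈ S, ((S.filter (fun w => H.Adj v w)).card : ℝ)
        ≤ β^2 * k * (k - 1) - (k - (S.card : ℝ)) * (4*β*k - 1 - (k - (S.card : ℝ)))) →
      (k - (S.card : ℝ) ≤ β * k) →
      ∃ T : Finset V, T ⊆ S ∧ (1 - β) * k ≤ (T.card : ℝ) ∧
        ∀ v ∈ T, (1 - 2*β) * k ≤ ((T.filter (fun w => H.Adj v w)).card : ℝ) := by
  intro n
  induction n using Nat.strong_induction_on with
  | _ n ih =>
    intro S hcard hinv hside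
    by_cases hex : ∃ v ∈ S, ((S.filter (fun w => H.Adj v w)).card : ℝ) < (1 - 2*β) * k
    · obtain ⟨v, hv, hdv⟩ := hex
      have hn1 : 1 ≤ n := hcard ▸ Finset.card_pos.2 ⟨v, hv⟩
      set S' := S.erase v with hS'
      have hcard' : S'.card = n - 1 := by rw [hS', Finset.card_erase_of_mem hv, hcard]
      have hcast : ((S'.card : ℝ)) = (S.card : ℝ) - 1 := by
        rw [hS', Finset.card_erase_of_mem hv]
        have : 1 ≤ S.card := hcard ▸ hn1
        push_cast [Nat.cast_sub this]
        ring
      -- sum identity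
      have hsum : (∑ u ∈ S, ((S.filter (fun w => H.Adj u w)).card : ℝ))
          = (∑ u ∈ S', ((S'.filter (fun w => H.Adj u w)).card : ℝ))
            + 2 * ((S.filter (fun w => H.Adj v w)).card : ℝ) := by
        have := sum_deg_erase H S v hv
        exact_mod_cast congrArg (Nat.cast : ℕ → ℝ) this
      set s : ℝ := (S.card : ℝ) with hs
      have hsk : s ≤ k := by
        rw [hkcard, hs]
        exact_mod_cast Finset.card_le_univ S
      -- new invariant
      have hinv' : ((S'.card : ℝ)) * ((S'.card : ℝ) - 1)
            - ∑ u ∈ S', ((S'.filter (fun w => H.Adj u w)).card : ℝ)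
          ≤ β^2 * k * (k - 1) - (k - (S'.card : ℝ)) * (4*β*k - 1 - (k - (S'.card : ℝ))) := by
        rw [hcast]
        have h := hinv
        nlinarith [hsum, hdv]
      -- new side condition
      have hmiss' : 0 ≤ ((S'.card : ℝ)) * ((S'.card : ℝ) - 1)
            - ∑ u ∈ S', ((S'.filter (fun w => H.Adj u w)).card : ℝ) := by
        have hb : ∀ u ∈ S', ((S'.filter (fun w => H.Adj u w)).card : ℝ) ≤ (S'.card : ℝ) - 1 := by
          intro u hu
          have h1 := degS_le H S' u hu
          have h2 : 1 ≤ S'.card := Finset.card_pos.2 ⟨u, hu⟩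
          have := Nat.cast_le (α := ℝ).2 h1
          rwa [Nat.cast_sub h2, Nat.cast_one] at this
        calc (0:ℝ) = (S'.card : ℝ) * ((S'.card : ℝ) - 1) - ∑ _u ∈ S', ((S'.card : ℝ) - 1) := by
              rw [Finset.sum_const, nsmul_eq_mul]; ring
          _ ≤ _ := by
              have := Finset.sum_le_sum hb
              linarith
      have hside' : k - (S'.card : ℝ) ≤ β * k := by
        by_contra hcon
        push_neg at hcon
        rw [hcast] at hcon hmiss' hinv'
        -- k - s + 1 > βk, k - s ≤ βk, 2 ≤ βk, (k-s+1)*(4βk-2-(k-s)) ≤ β²k(k-1)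
        nlinarith [hmiss', hinv', hside, hβk, hcon,
          mul_pos (lt_of_lt_of_le (by linarith : (0:ℝ) < β*k) (le_of_lt hcon))
            (by nlinarith : (0:ℝ) < 4*β*k - 1 - (k - s + 1))]
      obtain ⟨T, hTsub, hT1, hT2⟩ := ih (n-1) (by omega) S' hcard' hinv' hside'
      exact ⟨T, hTsub.trans (Finset.erase_subset _ _), hT1, hT2⟩
    · push_neg at hex
      refine ⟨S, Finset.Subset.refl S, ?_, hex⟩
      linarith

/-- A graph on k vertices with at least (1−α)·C(k,2) edges has an induced subgraph on
at least (1−√α)k vertices with minimum degree at least (1−2√α)k. -/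
theorem stmt10 {V : Type*} [Fintype V] (α : ℝ) (hα : 0 < α) (H : SimpleGraph V)
    (hk : 2 / Real.sqrt α ≤ (Fintype.card V : ℝ))
    (hE : (1 - α) * ((Fintype.card V).choose 2 : ℝ) ≤ (H.edgeSet.ncard : ℝ)) :
    ∃ S : Set V,
      (1 - Real.sqrt α) * (Fintype.card V : ℝ) ≤ (S.ncard : ℝ) ∧
      ∀ v ∈ S, (1 - 2 * Real.sqrt α) * (Fintype.card V : ℝ) ≤
        ({u : V | u ∈ S ∧ H.Adj v u}.ncard : ℝ) := by
  classical
  set β : ℝ := Real.sqrt α with hβdef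
  have hβ : 0 < β := Real.sqrt_pos.2 hα
  set k : ℝ := (Fintype.card V : ℝ) with hkdef
  have hβk : 2 ≤ β * k := by
    rw [mul_comm]
    exact (div_le_iff₀ hβ).1 hk
  have hk0 : 0 < k := by nlinarith
  by_cases hβ1 : 1 ≤ β
  · refine ⟨∅, ?_, by simp⟩
    simp only [Set.ncard_empty, Nat.cast_zero]
    apply mul_nonpos_of_nonpos_of_nonneg <;> linarith
  · push_neg at hβ1
    have hα' : α = β^2 := (Real.sq_sqrt hα.le).symm
    -- edge count
    have hEfin : (H.edgeSet.ncard : ℝ) = (H.edgeFinset.card : ℝ) := by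
      rw [← H.coe_edgeFinset, Set.ncard_coe_finset]
    have hchoose : (((Fintype.card V).choose 2 : ℕ) : ℝ) = k * (k - 1) / 2 := by
      rw [Nat.cast_choose_two]
    have hsumdeg : (∑ v ∈ Finset.univ, ((Finset.univ.filter (fun w => H.Adj v w)).card : ℝ))
        = 2 * (H.edgeFinset.card : ℝ) := by
      have h1 : ∀ v : V, (Finset.univ.filter (fun w => H.Adj v w)).card = H.degree v := by
        intro v
        rw [← SimpleGraph.card_neighborFinset_eq_degree]
        congr 1
        ext u
        simp [SimpleGraph.mem_neighborFinset]
      have := H.sum_degrees_eq_twice_card_edges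
      simp only [h1]
      exact_mod_cast this
    have hinv0 : ((Finset.univ : Finset V).card : ℝ) * (((Finset.univ : Finset V).card : ℝ) - 1)
          - ∑ v ∈ (Finset.univ : Finset V),
              (((Finset.univ : Finset V).filter (fun w => H.Adj v w)).card : ℝ)
        ≤ β^2 * k * (k - 1)
          - (k - ((Finset.univ : Finset V).card : ℝ))
            * (4*β*k - 1 - (k - ((Finset.univ : Finset V).card : ℝ))) := by
      rw [Finset.card_univ, ← hkdef, hsumdeg]
      have : (1 - α) * (k * (k - 1) / 2) ≤ (H.edgeFinset.card : ℝ) := by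
        rw [← hchoose, ← hEfin]; exact hE
      nlinarith [this]
    have hside0 : k - ((Finset.univ : Finset V).card : ℝ) ≤ β * k := by
      rw [Finset.card_univ, ← hkdef]
      nlinarith
    obtain ⟨T, _, hT1, hT2⟩ := aux H β k hβ hβk hkdef (Finset.univ.card) Finset.univ rfl
      hinv0 hside0
    refine ⟨(T : Set V), ?_, ?_⟩
    · rwa [Set.ncard_coe_finset]
    · intro v hv
      have hveq : {u : V | u ∈ (T : Set V) ∧ H.Adj v u} = ((T.filter (fun w => H.Adj v w)) : Set V) := by
        ext u
        simp [Finset.mem_filter]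
      rw [hveq, Set.ncard_coe_finset]
      exact hT2 v (by exact_mod_cast hv)
end

section
/- Let r ≥ 1 and let n be a positive multiple of 2^r, n = m·2^r with m ≥ 1. There exists a graph G on n vertices with minimum degree δ(G) = (1 − 1/2^r)·n − 1 and an r-edge-coloring of G such that V(G) cannot be covered by r monochromatic connected subgraphs of pairwise distinct colors. -/
/-!
Label the vertices by bit vectors in `{0,1}^r`, each label used by exactly `m` vertices, join two
distinct vertices when their labels agree in some coordinate, and colour the edge by such a
coordinate. Along an edge of colour `i` the `i`-th bit does not change, so a connected subgraph of
colour `i` has a constant `i`-th bit `b i`. Given parts of pairwise distinct colours, the label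
that takes the value `!b i` at every used colour `i` is then missed by all parts. The
non-neighbours of `v` are `v` itself and the `m` vertices carrying the complementary label, so
every degree is `n - m - 1`.
-/

open SimpleGraph

lemma SimpleGraph.Reachable.eq_of_forall_adj {X α : Type*} {H : SimpleGraph X} {g : X → α}
    (h : ∀ x y, H.Adj x y → g x = g y) {a b : X} (hab : H.Reachable a b) : g a = g b := by
  obtain ⟨w⟩ := hab
  induction w with
  | nil => rfl
  | cons hadj _ ih => exact (h _ _ hadj).trans ih

section CoordAgree

variable {V ι : Type*}

def coordAgreeGraph (π : V → ι → Bool) : SimpleGraph V where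
  Adj u v := u ≠ v ∧ ∃ i, π u i = π v i
  symm := ⟨fun _ _ h => ⟨h.1.symm, h.2.imp fun _ hi => hi.symm⟩⟩
  loopless := ⟨fun _ h => h.1 rfl⟩

lemma ncard_neighborSet_coordAgreeGraph [Finite V] [Nonempty ι] (π : V → ι → Bool) (v : V) :
    {w | (coordAgreeGraph π).Adj v w}.ncard =
      Nat.card V - (π ⁻¹' {fun i => !π v i}).ncard - 1 := by
  have hv : v ∉ π ⁻¹' {fun i => !π v i} := fun h => by
    simpa using congr_fun h (Classical.arbitrary ι)
  have hnbr : {w | (coordAgreeGraph π).Adj v w} = (insert v (π ⁻¹' {fun i => !π v i}))ᶜ := by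
    ext w
    simp [coordAgreeGraph, funext_iff, not_or, eq_comm]
  rw [hnbr, Set.ncard_compl, Set.ncard_insert_of_notMem hv, Nat.sub_add_eq]

variable {r : ℕ} [NeZero r]

noncomputable def coordAgreeColoring (π : V → Fin r → Bool) : Sym2 V → Fin r :=
  Sym2.lift ⟨fun u v => Classical.epsilon fun i => π u i = π v i,
    fun u v => by simp only [eq_comm]⟩

variable {π : V → Fin r → Bool}

lemma coordAgreeColoring_spec {u v : V} (h : (coordAgreeGraph π).Adj u v) :
    π u (coordAgreeColoring π s(u, v)) = π v (coordAgreeColoring π s(u, v)) :=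
  Classical.epsilon_spec h.2

lemma eq_of_monoSub_coordAgree_adj {i : Fin r} {u v : V}
    (h : (monoSub (coordAgreeGraph π) (coordAgreeColoring π) i).Adj u v) : π u i = π v i :=
  h.2 ▸ coordAgreeColoring_spec h.1

lemma exists_forall_coord_eq_of_connected {i : Fin r} {s : Set V}
    (hs : ((monoSub (coordAgreeGraph π) (coordAgreeColoring π) i).induce s).Connected) :
    ∃ b, ∀ w ∈ s, π w i = b := by
  obtain ⟨x⟩ := hs.nonempty
  refine ⟨π x i, fun w hw => ?_⟩
  exact (hs.preconnected ⟨w, hw⟩ x).eq_of_forall_adj (g := fun z : s => π z i)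
    fun _ _ hadj => eq_of_monoSub_coordAgree_adj hadj

theorem not_exists_cover_coordAgree {κ : Type*} (hπ : Function.Surjective π) :
    ¬ ∃ (f : κ → Set V) (col : κ → Fin r), Function.Injective col ∧
      (∀ j, ((monoSub (coordAgreeGraph π) (coordAgreeColoring π) (col j)).induce (f j)).Connected) ∧
      (⋃ j, f j) = Set.univ := by
  classical
  rintro ⟨f, col, hcol, hconn, hcover⟩
  choose b hb using fun j => exists_forall_coord_eq_of_connected (hconn j)
  obtain ⟨v, hv⟩ := hπ fun i => if h : ∃ j, col j = i then !b h.choose else false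
  obtain ⟨j, hvj⟩ := Set.mem_iUnion.mp (hcover ▸ Set.mem_univ v)
  have hchoose : (⟨j, rfl⟩ : ∃ j', col j' = col j).choose = j :=
    hcol (Exists.choose_spec (⟨j, rfl⟩ : ∃ j', col j' = col j))
  have := hb j v hvj
  simp [hv, hchoose] at this

end CoordAgree

lemma ncard_fst_preimage_singleton_of_equiv {V X Y : Type*} [Finite Y] (e : V ≃ X × Y) (x : X) :
    ((fun v => (e v).1) ⁻¹' {x}).ncard = Nat.card Y := by
  have hfiber : (fun v => (e v).1) ⁻¹' {x} = e ⁻¹' ({x} ×ˢ Set.univ) := by ext; simp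
  rw [hfiber, Set.ncard_preimage_of_injective_subset_range e.injective (by simp), Set.ncard_prod,
    Set.ncard_singleton, Set.ncard_univ, one_mul]

/-- Example: for n = m·2^r there is a graph on n vertices with minimum degree exactly
(1 − 1/2^r)n − 1 = n − m − 1 and an r-coloring which admits no cover of the vertex set
by at most r monochromatic connected subgraphs of pairwise distinct colors. -/
theorem stmt15 (r m n : ℕ) (hr : 1 ≤ r) (hm : 1 ≤ m) (hn : n = m * 2 ^ r) :
    ∃ G : SimpleGraph (Fin n),
      (∀ v : Fin n, n - m - 1 ≤ {w | G.Adj v w}.ncard) ∧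
      (∃ v : Fin n, {w | G.Adj v w}.ncard = n - m - 1) ∧
      ∃ c : Sym2 (Fin n) → Fin r,
        ¬ ∃ t : ℕ, t ≤ r ∧ ∃ (f : Fin t → Set (Fin n)) (col : Fin t → Fin r),
            Function.Injective col ∧
            (∀ j, ((monoSub G c (col j)).induce (f j)).Connected) ∧
            (⋃ j, f j) = Set.univ := by
  have : NeZero r := ⟨by omega⟩
  let e : Fin n ≃ (Fin r → Bool) × Fin m := Fintype.equivOfCardEq (by simp [hn, mul_comm])
  let π : Fin n → Fin r → Bool := fun v => (e v).1
  have hdeg : ∀ v, {w | (coordAgreeGraph π).Adj v w}.ncard = n - m - 1 := fun v => by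
    rw [ncard_neighborSet_coordAgreeGraph, ncard_fst_preimage_singleton_of_equiv,
      Nat.card_eq_fintype_card, Fintype.card_fin, Nat.card_eq_fintype_card, Fintype.card_fin]
  have hπ : Function.Surjective π := fun x => ⟨e.symm (x, ⟨0, hm⟩), by simp [π]⟩
  refine ⟨coordAgreeGraph π, fun v => (hdeg v).ge, ⟨e.symm (fun _ => true, ⟨0, hm⟩), hdeg _⟩,
    coordAgreeColoring π, ?_⟩
  rintro ⟨t, -, cover⟩
  exact not_exists_cover_coordAgree hπ cover
end
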